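/- Let z ∈ ℂ with z ≠ 0. Then there exists N₀ ∈ ℕ such that for all integers n ≥ N₀ one has h_n^{(1)}(z) ≠ 0 and z_n^{(1)}(z) ≠ 0; moreover, the sequence z_n^{(1)}(z)/(n·h_n^{(1)}(z)) converges to −1 as n → ∞. -/

import Mathlib

/-
Pulling the top term `k = n` out of the Rayleigh sum and reversing the order of summation gives
`h_n(z) = c_n(z) ∑_{j ≤ n} φ_{n,j}` and `z_n(z) = c_n(z) ∑_{j ≤ n} (iz - (n - j)) φ_{n,j}`, where
`c_n(z) ≠ 0` and `φ_{n,j} = (-2iz)^j / j! · n^{(j)} / (2n)^{(j)}` (falling factorials).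
Termwise `φ_{n,j} → (-iz)^j / j!`, and `|φ_{n,j}| ≤ (2|z|)^j / j!`, so by Tannery's theorem
`∑_j φ_{n,j} → e^{-iz}` and `∑_j (iz/n - (n - j)/n) φ_{n,j} → -e^{-iz}`, and the quotient of these
two sums is `z_n / (n h_n)`.
-/

open Complex

/-- Spherical Hankel function of the first kind (Rayleigh closed form). -/
noncomputable def sphHankel (n : ℕ) (z : ℂ) : ℂ :=
  (-Complex.I) ^ (n + 1) * (Complex.exp (Complex.I * z) / z) *
    ∑ k ∈ Finset.range (n + 1),
      (Complex.I ^ k / ((Nat.factorial k : ℂ) * (2 * z) ^ k)) *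
        ((Nat.factorial (n + k) : ℂ) / (Nat.factorial (n - k) : ℂ))

/-- `z_n^{(1)}(z) = h_n^{(1)}(z) + z * h_n^{(1)'}(z)`. -/
noncomputable def zfun (n : ℕ) (z : ℂ) : ℂ :=
  sphHankel n z + z * deriv (sphHankel n) z

open Filter Finset Topology

theorem tendsto_sum_range_succ_of_dominated {G : Type*} [NormedAddCommGroup G] [CompleteSpace G]
    {f : ℕ → ℕ → G} {g : ℕ → G} {bound : ℕ → ℝ} (h_sum : Summable bound)
    (hab : ∀ k, Tendsto (f · k) atTop (𝓝 (g k)))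
    (h_bound : ∀ᶠ n in atTop, ∀ k, ‖f n k‖ ≤ bound k) :
    Tendsto (fun n ↦ ∑ k ∈ range (n + 1), f n k) atTop (𝓝 (∑' k, g k)) := by
  let f' : ℕ → ℕ → G := fun n k ↦ if k ∈ range (n + 1) then f n k else 0
  have hf' : ∀ n, ∑' k, f' n k = ∑ k ∈ range (n + 1), f n k := fun n ↦ by
    rw [tsum_eq_sum (s := range (n + 1)) fun k hk ↦ if_neg hk, sum_ite_mem, inter_self]
  refine (tendsto_tsum_of_dominated_convergence h_sum (fun k ↦ ?_) ?_).congr hf'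
  · refine (hab k).congr' ?_
    filter_upwards [eventually_ge_atTop k] with n hn
    exact (if_pos (mem_range_succ_iff.2 hn)).symm
  · filter_upwards [h_bound] with n hn k
    by_cases hk : k ∈ range (n + 1)
    · simpa only [f', if_pos hk] using hn k
    · simpa only [f', if_neg hk, norm_zero] using (norm_nonneg _).trans (hn k)

theorem tendsto_natCast_mul_sub_div (k m : ℕ) :
    Tendsto (fun n : ℕ ↦ ((k * n - m : ℕ) : ℂ) / n) atTop (𝓝 k) := by
  rcases Nat.eq_zero_or_pos k with rfl | hk
  · simp
  have h := (tendsto_const_div_atTop_nhds_zero_nat (m : ℂ)).const_sub (k : ℂ)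
  rw [sub_zero] at h
  refine h.congr' ?_
  filter_upwards [eventually_ge_atTop (max m 1)] with n hn
  have hn0 : (n : ℂ) ≠ 0 := Nat.cast_ne_zero.2 (by omega)
  rw [Nat.cast_sub (by nlinarith [le_max_left m 1]), Nat.cast_mul, sub_div,
    mul_div_cancel_right₀ _ hn0]

noncomputable def hankelCoeff (n k : ℕ) : ℂ :=
  I ^ k / (k.factorial * 2 ^ k) * ((n + k).factorial / (n - k).factorial)

noncomputable def hankelTerm (z : ℂ) (n j : ℕ) : ℂ :=
  (-2 * I * z) ^ j / j.factorial * (n.descFactorial j / (2 * n).descFactorial j)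

theorem sphHankel_eq_sum (n : ℕ) :
    sphHankel n = fun w : ℂ ↦
      (-I) ^ (n + 1) * ∑ k ∈ range (n + 1), hankelCoeff n k * (exp (I * w) / w ^ (k + 1)) := by
  ext w
  rw [sphHankel, mul_assoc, Finset.mul_sum]
  congr 1
  refine Finset.sum_congr rfl fun k _ ↦ ?_
  simp only [hankelCoeff, div_eq_mul_inv, mul_inv, mul_pow, pow_succ, ← inv_pow]
  ring

theorem hasDerivAt_exp_I_mul_div_pow (k : ℕ) {z : ℂ} (hz : z ≠ 0) :
    HasDerivAt (fun w ↦ exp (I * w) / w ^ (k + 1))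
      (exp (I * z) * (I * z - (k + 1)) / z ^ (k + 2)) z := by
  have hexp : HasDerivAt (fun w ↦ exp (I * w)) (exp (I * z) * I) z := by
    simpa using (hasDerivAt_id z).const_mul I |>.cexp
  refine (hexp.div (hasDerivAt_pow (k + 1) z) (pow_ne_zero _ hz)).congr_deriv ?_
  field_simp
  push_cast
  ring

theorem zfun_eq_sum (n : ℕ) {z : ℂ} (hz : z ≠ 0) :
    zfun n z = (-I) ^ (n + 1) *
      ∑ k ∈ range (n + 1), hankelCoeff n k * (exp (I * z) * (I * z - k) / z ^ (k + 1)) := by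
  have hderiv := (HasDerivAt.fun_sum (u := range (n + 1)) fun k _ ↦
    (hasDerivAt_exp_I_mul_div_pow k hz).const_mul (hankelCoeff n k)).const_mul ((-I) ^ (n + 1))
  rw [zfun, sphHankel_eq_sum, hderiv.deriv, ← mul_left_comm, ← mul_add, Finset.mul_sum _ _ z,
    ← sum_add_distrib]
  refine congrArg _ (Finset.sum_congr rfl fun k _ ↦ ?_)
  field_simp
  ring

theorem hankelCoeff_sub_mul_pow (z : ℂ) {n j : ℕ} (hj : j ≤ n) :
    hankelCoeff n (n - j) * z ^ j = hankelCoeff n n * hankelTerm z n j := by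
  obtain ⟨m, rfl⟩ := Nat.exists_eq_add_of_le' hj
  have hfac (a b : ℕ) : ((a + b).factorial : ℂ) = a.factorial * (a + b).descFactorial b := by
    exact_mod_cast
      (Nat.add_sub_cancel a b ▸ Nat.factorial_mul_descFactorial (Nat.le_add_left b a)).symm
  have hI : I ^ (m + j) * (-2 * I * z) ^ j = I ^ m * (2 * z) ^ j := by
    rw [pow_add, mul_assoc, ← mul_pow]
    congr 2
    linear_combination (-2 * z) * I_sq
  have htwo : 2 * (m + j) = m + j + m + j := by ring
  have hdouble : m + j + (m + j) = m + j + m + j := by ring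
  simp only [hankelCoeff, hankelTerm, Nat.add_sub_cancel, Nat.add_sub_cancel_left, Nat.sub_self,
    htwo, hdouble, hfac m j, hfac (m + j + m) j, Nat.factorial_zero, Nat.cast_one]
  field_simp
  linear_combination (-(2 ^ m * ((m + j + m).factorial : ℂ) / (m.factorial * j.factorial))) * hI

theorem sum_hankelCoeff_mul_div_pow (n : ℕ) {z : ℂ} (hz : z ≠ 0) (w : ℕ → ℂ) :
    ∑ k ∈ range (n + 1), hankelCoeff n k * (w k / z ^ (k + 1)) =
      hankelCoeff n n / z ^ (n + 1) * ∑ j ∈ range (n + 1), w (n - j) * hankelTerm z n j := by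
  rw [Finset.mul_sum, ← sum_range_reflect]
  refine Finset.sum_congr rfl fun j hj ↦ ?_
  have hjn : j ≤ n := Nat.lt_succ_iff.1 (mem_range.1 hj)
  have hpow : z ^ (n + 1) = z ^ (n - j + 1) * z ^ j := by rw [← pow_add]; congr 1; omega
  rw [Nat.add_sub_cancel, hpow]
  field_simp
  linear_combination w (n - j) * hankelCoeff_sub_mul_pow z hjn

noncomputable def hankelScale (z : ℂ) (n : ℕ) : ℂ :=
  (-I) ^ (n + 1) * exp (I * z) * (hankelCoeff n n / z ^ (n + 1))

theorem hankelScale_ne_zero {z : ℂ} (hz : z ≠ 0) (n : ℕ) : hankelScale z n ≠ 0 := by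
  have hcoeff : hankelCoeff n n ≠ 0 := by simp [hankelCoeff, Nat.factorial_ne_zero]
  simp [hankelScale, hz, hcoeff]

theorem sphHankel_eq_hankelScale_mul (n : ℕ) {z : ℂ} (hz : z ≠ 0) :
    sphHankel n z = hankelScale z n * ∑ j ∈ range (n + 1), hankelTerm z n j := by
  simp only [sphHankel_eq_sum]
  rw [sum_hankelCoeff_mul_div_pow n hz fun _ ↦ exp (I * z), hankelScale,
    ← Finset.mul_sum]
  ring

theorem zfun_eq_hankelScale_mul (n : ℕ) {z : ℂ} (hz : z ≠ 0) :
    zfun n z = hankelScale z n *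
      ∑ j ∈ range (n + 1), (I * z - (n - j : ℕ)) * hankelTerm z n j := by
  rw [zfun_eq_sum n hz, sum_hankelCoeff_mul_div_pow n hz fun k ↦ exp (I * z) * (I * z - k),
    hankelScale]
  simp only [mul_assoc, ← Finset.mul_sum]
  ring

theorem zfun_div_natCast_mul_sphHankel (n : ℕ) {z : ℂ} (hz : z ≠ 0) :
    zfun n z / (n * sphHankel n z) =
      (∑ j ∈ range (n + 1), (I * z / n - (n - j : ℕ) / n) * hankelTerm z n j) /
        ∑ j ∈ range (n + 1), hankelTerm z n j := by
  rw [zfun_eq_hankelScale_mul n hz, sphHankel_eq_hankelScale_mul n hz, mul_left_comm,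
    mul_div_mul_left _ _ (hankelScale_ne_zero hz n), ← div_div, sum_div]
  congr 1
  exact Finset.sum_congr rfl fun j _ ↦ by ring

theorem norm_hankelTerm_le (z : ℂ) (n j : ℕ) :
    ‖hankelTerm z n j‖ ≤ (2 * ‖z‖) ^ j / j.factorial := by
  have hratio : ‖(n.descFactorial j : ℂ) / (2 * n).descFactorial j‖ ≤ 1 := by
    rw [norm_div, Complex.norm_natCast, Complex.norm_natCast]
    exact div_le_one_of_le₀ (by exact_mod_cast Nat.descFactorial_le j (by omega))
      (Nat.cast_nonneg _)
  calc ‖hankelTerm z n j‖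
      = (2 * ‖z‖) ^ j / j.factorial * ‖(n.descFactorial j : ℂ) / (2 * n).descFactorial j‖ := by
        simp [hankelTerm, norm_pow]
    _ ≤ (2 * ‖z‖) ^ j / j.factorial := mul_le_of_le_one_right (by positivity) hratio

theorem tendsto_descFactorial_div_descFactorial_two_mul (j : ℕ) :
    Tendsto (fun n : ℕ ↦ (n.descFactorial j : ℂ) / (2 * n).descFactorial j) atTop
      (𝓝 ((1 / 2) ^ j)) := by
  simp_rw [Nat.descFactorial_eq_prod_range, Nat.cast_prod, ← prod_div_distrib]
  rw [pow_eq_prod_const]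
  refine tendsto_finsetProd _ fun m _ ↦ ?_
  have h := (tendsto_natCast_mul_sub_div 1 m).div (tendsto_natCast_mul_sub_div 2 m) two_ne_zero
  rw [Nat.cast_one, Nat.cast_two] at h
  refine h.congr' ?_
  filter_upwards [eventually_ne_atTop 0] with n hn
  rw [Pi.div_apply, one_mul, div_div_div_cancel_right₀ (Nat.cast_ne_zero.2 hn)]

theorem tendsto_hankelTerm (z : ℂ) (j : ℕ) :
    Tendsto (hankelTerm z · j) atTop (𝓝 ((-(I * z)) ^ j / j.factorial)) := by
  have h := (tendsto_descFactorial_div_descFactorial_two_mul j).const_mul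
    ((-2 * I * z) ^ j / j.factorial)
  have hlim : (-2 * I * z) ^ j / j.factorial * (1 / 2) ^ j = (-(I * z)) ^ j / j.factorial := by
    rw [div_mul_eq_mul_div, ← mul_pow]
    ring_nf
  rw [← hlim]
  exact h

theorem tendsto_sum_hankelTerm (z : ℂ) :
    Tendsto (fun n ↦ ∑ j ∈ range (n + 1), hankelTerm z n j) atTop (𝓝 (exp (-(I * z)))) := by
  rw [Complex.exp_eq_exp_ℂ, NormedSpace.exp_eq_tsum_div]
  exact tendsto_sum_range_succ_of_dominated (Real.summable_pow_div_factorial _)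
    (tendsto_hankelTerm z) (.of_forall (norm_hankelTerm_le z))

theorem tendsto_sum_div_natCast_mul_hankelTerm (z : ℂ) :
    Tendsto (fun n : ℕ ↦ ∑ j ∈ range (n + 1), (I * z / n - (n - j : ℕ) / n) * hankelTerm z n j)
      atTop (𝓝 (-exp (-(I * z)))) := by
  rw [Complex.exp_eq_exp_ℂ, NormedSpace.exp_eq_tsum_div, ← tsum_neg]
  refine tendsto_sum_range_succ_of_dominated
    ((Real.summable_pow_div_factorial (2 * ‖z‖)).mul_left (‖z‖ + 1)) (fun j ↦ ?_) ?_
  · have h := ((tendsto_const_div_atTop_nhds_zero_nat (I * z)).sub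
      (tendsto_natCast_mul_sub_div 1 j)).mul (tendsto_hankelTerm z j)
    simpa using h
  · filter_upwards [eventually_ge_atTop 1] with n hn j
    have hn' : (1 : ℝ) ≤ n := by exact_mod_cast hn
    have hweight : ‖I * z / n - (n - j : ℕ) / n‖ ≤ ‖z‖ + 1 := by
      refine (norm_sub_le _ _).trans (add_le_add ?_ ?_)
      · rw [norm_div, norm_mul, Complex.norm_I, one_mul, Complex.norm_natCast]
        exact div_le_self (norm_nonneg z) hn'
      · rw [norm_div, Complex.norm_natCast, Complex.norm_natCast]
        exact div_le_one_of_le₀ (by exact_mod_cast Nat.sub_le n j) (Nat.cast_nonneg _)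
    rw [norm_mul]
    exact mul_le_mul hweight (norm_hankelTerm_le z n j) (norm_nonneg _) (by positivity)

theorem delta_div_n_tendsto_neg_one (z : ℂ) (hz : z ≠ 0) :
    ∃ N₀ : ℕ, (∀ n : ℕ, N₀ ≤ n → sphHankel n z ≠ 0 ∧ zfun n z ≠ 0) ∧
      Filter.Tendsto (fun n : ℕ => zfun n z / ((n : ℂ) * sphHankel n z))
        Filter.atTop (nhds (-1)) := by
  have hexp : exp (-(I * z)) ≠ 0 := exp_ne_zero _
  have hF := tendsto_sum_hankelTerm z
  have hlim : Tendsto (fun n : ℕ ↦ zfun n z / (n * sphHankel n z)) atTop (𝓝 (-1)) := by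
    simp_rw [zfun_div_natCast_mul_sphHankel _ hz]
    simpa [Pi.div_def, neg_div, div_self hexp] using
      (tendsto_sum_div_natCast_mul_hankelTerm z).div hF hexp
  obtain ⟨N₀, hN₀⟩ := eventually_atTop.1
    ((hF.eventually_ne hexp).and (hlim.eventually_ne (neg_ne_zero.2 one_ne_zero)))
  refine ⟨N₀, fun n hn ↦ ?_, hlim⟩
  obtain ⟨hFn, hratio⟩ := hN₀ n hn
  refine ⟨?_, fun hzero ↦ hratio (by rw [hzero, zero_div])⟩
  rw [sphHankel_eq_hankelScale_mul n hz]
  exact mul_ne_zero (hankelScale_ne_zero hz n) hFn
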